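/- Let q be a positive integer, Q = (q+1)/2, j a positive integer, c_1 ≥ c_2 ≥ … ≥ c_j positive integers, and δ a nonnegative integer with δ ≥ j. For k ∈ {1, …, j} define λ_k = (δ − j + 1) − ∑_{r=1}^{k−1}(θ(c_r) − 1), and let ℓ ∈ {1, …, j} be the largest index with λ_ℓ ≥ 1. Then the vector defined by x_i = θ(c_i) for i = 1, …, ℓ−1, x_ℓ = θ(min(λ_ℓ, c_ℓ)), and x_i = 1 for i = ℓ+1, …, j is feasible (each x_i is a nonnegative integer with x_i ≤ c_i and ∑_{i=1}^j x_i ≤ δ) and its value satisfies ∑_{i=1}^j π(x_i) = j − 1 + π(min(λ_ℓ, c_ℓ)) + ∑_{i=1}^{ℓ−1}(π(c_i) − 1). -/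

import Mathlib

/-! `θ(α)` is the smallest budget with value `π(α)`, and `θ(α) ≤ α`; so spending `θ(c_i)` on
the first `ℓ - 1` coordinates earns `π(c_i)` each, within capacity. After also reserving `1`
for each of the last `j - ℓ` coordinates, exactly `λ_ℓ` of the budget is left for
coordinate `ℓ`, and `x_ℓ = θ(min(λ_ℓ, c_ℓ)) ≤ λ_ℓ`. -/

/-- Ceiling division of natural numbers: `cdiv a b = ⌈a / b⌉` (for `b > 0`). -/
def cdiv (a b : ℕ) : ℕ := (a + b - 1) / b

/-- `⌈Q⌉` where `Q = (q+1)/2`. -/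
def Qceil (q : ℕ) : ℕ := cdiv (q + 1) 2

/-- `⌊Q⌋` where `Q = (q+1)/2`. -/
def Qfloor (q : ℕ) : ℕ := (q + 1) / 2

/-- `π(Δ) = ⌈Δ/q⌉` if `Δ ≤ q`, and `π(Δ) = ⌈(Δ−q)/⌈Q⌉⌉ + 1` if `Δ > q`. -/
def piF (q Δ : ℕ) : ℕ := if Δ ≤ q then cdiv Δ q else cdiv (Δ - q) (Qceil q) + 1

/-- `θ(α) = π(α)` if `α ≤ q`, and `θ(α) = (π(α)−1)·⌈Q⌉ + ⌊Q⌋` if `α > q`. -/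
def thetaF (q α : ℕ) : ℕ := if α ≤ q then piF q α else (piF q α - 1) * Qceil q + Qfloor q

open Finset

lemma Qceil_add_Qfloor (q : ℕ) : Qceil q + Qfloor q = q + 1 := by
  unfold Qceil Qfloor cdiv; omega

lemma Qceil_pos (q : ℕ) : 0 < Qceil q := by
  unfold Qceil cdiv; omega

lemma cdiv_mul_add_one (k : ℕ) {b : ℕ} (hb : 0 < b) : cdiv (k * b + 1) b = k + 1 := by
  unfold cdiv
  rw [show k * b + 1 + b - 1 = (k + 1) * b by rw [Nat.succ_mul]; omega, Nat.mul_div_cancel _ hb]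

lemma piF_of_le {q α : ℕ} (hq : 0 < q) (h : α ≤ q) : piF q α = min α 1 := by
  unfold piF cdiv
  rw [if_pos h]
  rcases Nat.eq_zero_or_pos α with rfl | hα
  · exact Nat.div_eq_of_lt (by omega)
  · rw [Nat.div_eq_of_lt_le (k := 1) (by omega) (by omega)]; omega

lemma piF_of_lt {q α : ℕ} (h : q < α) : piF q α = cdiv (α - q) (Qceil q) + 1 := by
  unfold piF; rw [if_neg (by omega)]

lemma thetaF_of_lt {q α : ℕ} (h : q < α) :
    thetaF q α = cdiv (α - q) (Qceil q) * Qceil q + Qfloor q := by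
  unfold thetaF; rw [if_neg (by omega), piF_of_lt h, Nat.add_sub_cancel]

lemma thetaF_le (q α : ℕ) (hq : 0 < q) : thetaF q α ≤ α := by
  rcases le_or_gt α q with h | h
  · rw [thetaF, if_pos h, piF_of_le hq h]; exact min_le_left _ _
  · have hmul : cdiv (α - q) (Qceil q) * Qceil q ≤ α - q + Qceil q - 1 :=
      Nat.div_mul_le_self _ _
    have := Qceil_add_Qfloor q
    rw [thetaF_of_lt h]; omega

lemma piF_thetaF (q α : ℕ) (hq : 0 < q) : piF q (thetaF q α) = piF q α := by
  rcases le_or_gt α q with h | h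
  · rw [thetaF, if_pos h, piF_of_le hq h, piF_of_le hq (by omega), min_eq_left (min_le_right _ _)]
  · obtain ⟨k, hk⟩ : ∃ k, cdiv (α - q) (Qceil q) = k + 1 := by
      refine ⟨cdiv (α - q) (Qceil q) - 1, ?_⟩
      have : 1 ≤ cdiv (α - q) (Qceil q) := (Nat.one_le_div_iff (Qceil_pos q)).2 (by omega)
      omega
    have hθ : thetaF q α = q + (k * Qceil q + 1) := by
      have := Qceil_add_Qfloor q
      rw [thetaF_of_lt h, hk, Nat.succ_mul]; omega
    rw [hθ, piF_of_lt (by omega), piF_of_lt h, Nat.add_sub_cancel_left,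
      cdiv_mul_add_one k (Qceil_pos q), hk]

lemma sum_Icc_one_split {M : Type*} [AddCommMonoid M] (g : ℕ → M) {ℓ j : ℕ}
    (hℓ : 1 ≤ ℓ) (hℓj : ℓ ≤ j) :
    ∑ i ∈ Icc 1 j, g i = ∑ i ∈ Icc 1 (ℓ - 1), g i + g ℓ + ∑ i ∈ Ioc ℓ j, g i := by
  obtain ⟨n, rfl⟩ : ∃ n, ℓ = n + 1 := ⟨ℓ - 1, by omega⟩
  have hIcc (m : ℕ) : Icc 1 m = Ioc 0 m := Icc_add_one_left_eq_Ioc 0 m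
  rw [Nat.add_sub_cancel, hIcc, hIcc, ← sum_Ioc_consecutive g (Nat.zero_le _) hℓj,
    sum_Ioc_succ_top (Nat.zero_le n)]

lemma sum_Icc_one_of_piecewise {M : Type*} [AddCommMonoid M] (f : ℕ → M) {x a : ℕ → ℕ}
    {ℓ j b : ℕ} (hℓ : 1 ≤ ℓ) (hℓj : ℓ ≤ j)
    (hlt : ∀ i, 1 ≤ i → i < ℓ → x i = a i) (hgt : ∀ i, ℓ < i → i ≤ j → x i = b) :
    ∑ i ∈ Icc 1 j, f (x i) = ∑ i ∈ Icc 1 (ℓ - 1), f (a i) + f (x ℓ) + (j - ℓ) • f b := by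
  rw [sum_Icc_one_split _ hℓ hℓj]
  congr 1
  · congr 1
    refine sum_congr rfl fun i hi ↦ ?_
    rw [mem_Icc] at hi
    rw [hlt i hi.1 (by omega)]
  · have hb : ∀ i ∈ Ioc ℓ j, f (x i) = f b := fun i hi ↦ by
      rw [mem_Ioc] at hi; rw [hgt i hi.1 hi.2]
    rw [sum_congr rfl hb, sum_const, Nat.card_Ioc]

lemma sum_Icc_sub_one (f : ℕ → ℤ) (n : ℕ) : ∑ i ∈ Icc 1 n, (f i - 1) = ∑ i ∈ Icc 1 n, f i - n := by
  simp [sum_sub_distrib]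

theorem dpf_optimal_policy_general (q : ℕ) (hq : 0 < q) (j : ℕ)
    (c : ℕ → ℕ) (hc : ∀ i, 1 ≤ i → i ≤ j → 0 < c i)
    (δ : ℕ)
    (lam : ℕ → ℤ)
    (hlam : ∀ k, lam k =
      (δ : ℤ) - (j : ℤ) + 1 - ∑ r ∈ Finset.Icc 1 (k - 1), ((thetaF q (c r) : ℤ) - 1))
    (ℓ : ℕ) (hℓ1 : 1 ≤ ℓ) (hℓj : ℓ ≤ j) (hℓpos : 1 ≤ lam ℓ)
    (x : ℕ → ℕ)
    (hx1 : ∀ i, 1 ≤ i → i < ℓ → x i = thetaF q (c i))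
    (hx2 : x ℓ = thetaF q (min (lam ℓ).toNat (c ℓ)))
    (hx3 : ∀ i, ℓ < i → i ≤ j → x i = 1) :
    (∀ i, 1 ≤ i → i ≤ j → x i ≤ c i) ∧
    (∑ i ∈ Finset.Icc 1 j, x i ≤ δ) ∧
    ((∑ i ∈ Finset.Icc 1 j, (piF q (x i) : ℤ)) =
      (j : ℤ) - 1 + (piF q (min (lam ℓ).toNat (c ℓ)) : ℤ) +
        ∑ i ∈ Finset.Icc 1 (ℓ - 1), ((piF q (c i) : ℤ) - 1)) := by
  set μ := min (lam ℓ).toNat (c ℓ)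
  have hxℓ : x ℓ ≤ μ := hx2 ▸ thetaF_le q μ hq
  refine ⟨fun i hi hij ↦ ?_, ?_, ?_⟩
  · rcases lt_trichotomy i ℓ with h | rfl | h
    · exact hx1 i hi h ▸ thetaF_le q (c i) hq
    · exact hxℓ.trans (min_le_right _ _)
    · exact hx3 i h hij ▸ hc i hi hij
  · have hsum := sum_Icc_one_of_piecewise id hℓ1 hℓj hx1 hx3
    have hlamℓ := hlam ℓ
    rw [sum_Icc_sub_one, ← Nat.cast_sum] at hlamℓ
    have hμ : (μ : ℤ) ≤ lam ℓ :=
      (Int.ofNat_le.2 (min_le_left _ _)).trans (Int.toNat_of_nonneg (by omega)).le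
    simp only [id, smul_eq_mul, mul_one] at hsum
    omega
  · have hsum := sum_Icc_one_of_piecewise (fun n ↦ (piF q n : ℤ)) hℓ1 hℓj hx1 hx3
    simp only [piF_thetaF q _ hq, hx2, piF_of_le hq hq, min_self, nsmul_eq_mul] at hsum
    rw [hsum, sum_Icc_sub_one, Nat.cast_sub hℓj, Nat.cast_sub hℓ1]
    push_cast
    ring

/-- attainment half of Theorem 1: with sorted capacities and `δ ≥ j`,
the policy `x_i = θ(c_i)` for `i < ℓ`, `x_ℓ = θ(min(λ_ℓ, c_ℓ))`, `x_i = 1` for `i > ℓ`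
is feasible for `DPF_j` and its value equals
`j − 1 + π(min(λ_ℓ, c_ℓ)) + ∑_{i<ℓ} (π(c_i) − 1)`. -/
theorem dpf_optimal_policy (q : ℕ) (hq : 0 < q) (j : ℕ) (hj : 0 < j)
    (c : ℕ → ℕ) (hc : ∀ i, 1 ≤ i → i ≤ j → 0 < c i)
    (hsort : ∀ i k, 1 ≤ i → i ≤ k → k ≤ j → c k ≤ c i)
    (δ : ℕ) (hδ : j ≤ δ)
    (lam : ℕ → ℤ)
    (hlam : ∀ k, lam k =
      (δ : ℤ) - (j : ℤ) + 1 - ∑ r ∈ Finset.Icc 1 (k - 1), ((thetaF q (c r) : ℤ) - 1))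
    (ℓ : ℕ) (hℓ1 : 1 ≤ ℓ) (hℓj : ℓ ≤ j) (hℓpos : 1 ≤ lam ℓ)
    (hℓmax : ∀ k, 1 ≤ k → k ≤ j → 1 ≤ lam k → k ≤ ℓ)
    (x : ℕ → ℕ)
    (hx1 : ∀ i, 1 ≤ i → i < ℓ → x i = thetaF q (c i))
    (hx2 : x ℓ = thetaF q (min (lam ℓ).toNat (c ℓ)))
    (hx3 : ∀ i, ℓ < i → i ≤ j → x i = 1) :
    (∀ i, 1 ≤ i → i ≤ j → x i ≤ c i) ∧
    (∑ i ∈ Finset.Icc 1 j, x i ≤ δ) ∧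
    ((∑ i ∈ Finset.Icc 1 j, (piF q (x i) : ℤ)) =
      (j : ℤ) - 1 + (piF q (min (lam ℓ).toNat (c ℓ)) : ℤ) +
        ∑ i ∈ Finset.Icc 1 (ℓ - 1), ((piF q (c i) : ℤ) - 1)) :=
  dpf_optimal_policy_general q hq j c hc δ lam hlam ℓ hℓ1 hℓj hℓpos x hx1 hx2 hx3
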